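/- (Explicit 2-soliton of the hyperbolic sine-Gordon equation obtained from the Bianchi Permutability Theorem.) Let σ₁, σ₂ ∈ ℝ be nonzero with σ₁ ≠ σ₂, let c₁, c₂ ∈ ℝ, and set sⱼ(u,v) := ((σⱼ−σⱼ⁻¹)/2)·u + ((σⱼ+σⱼ⁻¹)/2)·v + cⱼ for j = 1, 2. Then the function ω₃(u,v) := 2·arctan( ((σ₂+σ₁)/(σ₂−σ₁)) · (exp(s₂(u,v)) − exp(s₁(u,v))) / (1 + exp(s₁(u,v)+s₂(u,v))) ) is smooth on ℝ² and satisfies the hyperbolic sine-Gordon equation ∂²ω₃/∂v² − ∂²ω₃/∂u² = cos ω₃ · sin ω₃ at every point of ℝ². -/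

import Mathlib

noncomputable def W1 (A a₁ a₂ x y : ℝ) : ℝ :=
  2*A*((a₂*y - a₁*x)*(1+x*y) - (y-x)*((a₁+a₂)*(x*y))) / ((1+x*y)^2 + A^2*(y-x)^2)

noncomputable def W2 (A a₁ a₂ x y : ℝ) : ℝ :=
  ((2*A*((a₂^2*y - a₁^2*x)*(1+x*y) - (y-x)*((a₁+a₂)^2*(x*y)))) * ((1+x*y)^2 + A^2*(y-x)^2)
   - (2*A*((a₂*y - a₁*x)*(1+x*y) - (y-x)*((a₁+a₂)*(x*y)))) *
     (2*(1+x*y)*((a₁+a₂)*(x*y)) + A^2*(2*(y-x)*(a₂*y-a₁*x))))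
  / ((1+x*y)^2 + A^2*(y-x)^2)^2

lemma hasDerivAt_exp_aff (a k t : ℝ) :
    HasDerivAt (fun t : ℝ => Real.exp (a*t+k)) (a * Real.exp (a*t+k)) t := by
  have h : HasDerivAt (fun t : ℝ => a*t+k) a t := by
    simpa using ((hasDerivAt_id t).const_mul a).add_const k
  simpa [mul_comm] using h.exp

lemma Dpos {A : ℝ} {x y : ℝ} (hx : 0 < x) (hy : 0 < y) :
    0 < (1+x*y)^2 + A^2*(y-x)^2 := by positivity

lemma firstDeriv (A a₁ k₁ a₂ k₂ t : ℝ) :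
    HasDerivAt (fun t => 2 * Real.arctan (A * ((Real.exp (a₂*t+k₂) - Real.exp (a₁*t+k₁))
        / (1 + Real.exp ((a₁*t+k₁) + (a₂*t+k₂))))))
      (W1 A a₁ a₂ (Real.exp (a₁*t+k₁)) (Real.exp (a₂*t+k₂))) t := by
  have hx := hasDerivAt_exp_aff a₁ k₁ t
  have hy := hasDerivAt_exp_aff a₂ k₂ t
  have hs : HasDerivAt (fun t : ℝ => (a₁*t+k₁) + (a₂*t+k₂)) (a₁ + a₂) t := by
    have h1 : HasDerivAt (fun t : ℝ => a₁*t+k₁) a₁ t := by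
      simpa using ((hasDerivAt_id t).const_mul a₁).add_const k₁
    have h2 : HasDerivAt (fun t : ℝ => a₂*t+k₂) a₂ t := by
      simpa using ((hasDerivAt_id t).const_mul a₂).add_const k₂
    exact h1.add h2
  have hden := (hs.exp.const_add 1)
  have hne : (1 : ℝ) + Real.exp ((a₁*t+k₁) + (a₂*t+k₂)) ≠ 0 := by positivity
  have hq := (((hy.sub hx).div hden hne).const_mul A).arctan.const_mul 2
  refine hq.congr_deriv ?_
  symm
  simp only [Pi.sub_apply, Pi.div_apply]
  have hE : Real.exp ((a₁*t+k₁) + (a₂*t+k₂)) = Real.exp (a₁*t+k₁) * Real.exp (a₂*t+k₂) :=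
    Real.exp_add _ _
  rw [W1, hE]
  set x := Real.exp (a₁*t+k₁)
  set y := Real.exp (a₂*t+k₂)
  have hx0 : 0 < x := Real.exp_pos _
  have hy0 : 0 < y := Real.exp_pos _
  have h1 : (1:ℝ) + x*y ≠ 0 := by positivity
  have h2 : (1+x*y)^2 + A^2*(y-x)^2 ≠ 0 := ne_of_gt (Dpos hx0 hy0)
  field_simp

lemma secondDeriv (A a₁ k₁ a₂ k₂ t : ℝ) :
    HasDerivAt (fun t => W1 A a₁ a₂ (Real.exp (a₁*t+k₁)) (Real.exp (a₂*t+k₂)))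
      (W2 A a₁ a₂ (Real.exp (a₁*t+k₁)) (Real.exp (a₂*t+k₂))) t := by
  have hx := hasDerivAt_exp_aff a₁ k₁ t
  have hy := hasDerivAt_exp_aff a₂ k₂ t
  set x := Real.exp (a₁*t+k₁) with hxd
  set y := Real.exp (a₂*t+k₂) with hyd
  have hx0 : 0 < x := Real.exp_pos _
  have hy0 : 0 < y := Real.exp_pos _
  have hNum : HasDerivAt (fun t => 2*A*((a₂*Real.exp (a₂*t+k₂) - a₁*Real.exp (a₁*t+k₁))*(1+Real.exp (a₁*t+k₁)*Real.exp (a₂*t+k₂)) - (Real.exp (a₂*t+k₂)-Real.exp (a₁*t+k₁))*((a₁+a₂)*(Real.exp (a₁*t+k₁)*Real.exp (a₂*t+k₂)))))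
      (2*A*(((a₂*(a₂*y) - a₁*(a₁*x))*(1+x*y) + (a₂*y-a₁*x)*(a₁*x*y + x*(a₂*y)))
        - ((a₂*y - a₁*x)*((a₁+a₂)*(x*y)) + (y-x)*((a₁+a₂)*(a₁*x*y + x*(a₂*y)))))) t := by
    exact ((((hy.const_mul a₂).sub (hx.const_mul a₁)).mul ((hx.mul hy).const_add 1)).sub
      ((hy.sub hx).mul (((hx.mul hy)).const_mul (a₁+a₂)))).const_mul (2*A)
  have hDen : HasDerivAt (fun t => (1+Real.exp (a₁*t+k₁)*Real.exp (a₂*t+k₂))^2 + A^2*(Real.exp (a₂*t+k₂)-Real.exp (a₁*t+k₁))^2)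
      ((2:ℕ)*(1+x*y)^1*(a₁*x*y + x*(a₂*y)) + A^2*((2:ℕ)*(y-x)^1*(a₂*y - a₁*x))) t := by
    exact (((hx.mul hy).const_add 1).pow 2).add (((hy.sub hx).pow 2).const_mul (A^2))
  have hDne : (1+x*y)^2 + A^2*(y-x)^2 ≠ 0 := ne_of_gt (Dpos hx0 hy0)
  have h := hNum.div hDen hDne
  have hfun : (fun t => W1 A a₁ a₂ (Real.exp (a₁*t+k₁)) (Real.exp (a₂*t+k₂))) =
      (fun t => 2*A*((a₂*Real.exp (a₂*t+k₂) - a₁*Real.exp (a₁*t+k₁))*(1+Real.exp (a₁*t+k₁)*Real.exp (a₂*t+k₂)) - (Real.exp (a₂*t+k₂)-Real.exp (a₁*t+k₁))*((a₁+a₂)*(Real.exp (a₁*t+k₁)*Real.exp (a₂*t+k₂))))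
        / ((1+Real.exp (a₁*t+k₁)*Real.exp (a₂*t+k₂))^2 + A^2*(Real.exp (a₂*t+k₂)-Real.exp (a₁*t+k₁))^2)) := by
    funext s; rw [W1]
  rw [hfun]
  refine h.congr_deriv ?_
  symm
  rw [W2]
  field_simp
  ring

lemma rhs_eq (g : ℝ) :
    Real.cos (2 * Real.arctan g) * Real.sin (2 * Real.arctan g)
      = (1 - g^2) * (2*g) / (1+g^2)^2 := by
  have h0 : (0:ℝ) ≤ 1 + g^2 := by positivity
  have hs : Real.sqrt (1+g^2) ≠ 0 := by positivity
  rw [Real.cos_two_mul, Real.sin_two_mul, Real.sin_arctan, Real.cos_arctan]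
  have h1 : Real.sqrt (1+g^2) ^ 2 = 1 + g^2 := Real.sq_sqrt h0
  field_simp
  have h4 : Real.sqrt (1+g^2) ^ 4 = (1 + g^2)^2 := by rw [show (4:ℕ) = 2*2 from rfl, pow_mul, h1]
  rw [h4, h1]
  ring

set_option maxHeartbeats 4000000 in
lemma poly_key (σ₁ σ₂ X Y A a₁ b₁ a₂ b₂ : ℝ) (hσ₁ : σ₁ ≠ 0) (hσ₂ : σ₂ ≠ 0)
    (hd : σ₂ - σ₁ ≠ 0)
    (hA : A = (σ₂+σ₁)/(σ₂-σ₁)) (ha₁ : a₁ = (σ₁-σ₁⁻¹)/2) (hb₁ : b₁ = (σ₁+σ₁⁻¹)/2)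
    (ha₂ : a₂ = (σ₂-σ₂⁻¹)/2) (hb₂ : b₂ = (σ₂+σ₂⁻¹)/2) :
    ((2*A*((b₂^2*Y - b₁^2*X)*(1+X*Y) - (Y-X)*((b₁+b₂)^2*(X*Y)))) * ((1+X*Y)^2 + A^2*(Y-X)^2)
      - (2*A*((b₂*Y - b₁*X)*(1+X*Y) - (Y-X)*((b₁+b₂)*(X*Y)))) *
        (2*(1+X*Y)*((b₁+b₂)*(X*Y)) + A^2*(2*(Y-X)*(b₂*Y-b₁*X))))
    - ((2*A*((a₂^2*Y - a₁^2*X)*(1+X*Y) - (Y-X)*((a₁+a₂)^2*(X*Y)))) * ((1+X*Y)^2 + A^2*(Y-X)^2)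
      - (2*A*((a₂*Y - a₁*X)*(1+X*Y) - (Y-X)*((a₁+a₂)*(X*Y)))) *
        (2*(1+X*Y)*((a₁+a₂)*(X*Y)) + A^2*(2*(Y-X)*(a₂*Y-a₁*X))))
    = 2*A*(Y-X)*(1+X*Y)*((1+X*Y)^2 - A^2*(Y-X)^2) := by
  subst hA ha₁ hb₁ ha₂ hb₂
  field_simp
  ring

set_option maxHeartbeats 1000000 in
lemma key (A a₁ b₁ a₂ b₂ X Y : ℝ) (hX : 0 < X) (hY : 0 < Y)
    (h : ((2*A*((b₂^2*Y - b₁^2*X)*(1+X*Y) - (Y-X)*((b₁+b₂)^2*(X*Y)))) * ((1+X*Y)^2 + A^2*(Y-X)^2)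
      - (2*A*((b₂*Y - b₁*X)*(1+X*Y) - (Y-X)*((b₁+b₂)*(X*Y)))) *
        (2*(1+X*Y)*((b₁+b₂)*(X*Y)) + A^2*(2*(Y-X)*(b₂*Y-b₁*X))))
    - ((2*A*((a₂^2*Y - a₁^2*X)*(1+X*Y) - (Y-X)*((a₁+a₂)^2*(X*Y)))) * ((1+X*Y)^2 + A^2*(Y-X)^2)
      - (2*A*((a₂*Y - a₁*X)*(1+X*Y) - (Y-X)*((a₁+a₂)*(X*Y)))) *
        (2*(1+X*Y)*((a₁+a₂)*(X*Y)) + A^2*(2*(Y-X)*(a₂*Y-a₁*X))))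
    = 2*A*(Y-X)*(1+X*Y)*((1+X*Y)^2 - A^2*(Y-X)^2)) :
    W2 A b₁ b₂ X Y - W2 A a₁ a₂ X Y
      = Real.cos (2 * Real.arctan (A * ((Y - X)/(1+X*Y))))
        * Real.sin (2 * Real.arctan (A * ((Y - X)/(1+X*Y)))) := by
  rw [rhs_eq, W2, W2, div_sub_div_same, h]
  have hD : (1:ℝ)+X*Y ≠ 0 := by positivity
  have hQ : (1+X*Y)^2 + A^2*(Y-X)^2 ≠ 0 := by positivity
  field_simp


/-- Partial derivative with respect to the first variable `u`. -/
noncomputable def pdu (f : ℝ × ℝ → ℝ) (p : ℝ × ℝ) : ℝ :=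
  deriv (fun u => f (u, p.2)) p.1

/-- Partial derivative with respect to the second variable `v`. -/
noncomputable def pdv (f : ℝ × ℝ → ℝ) (p : ℝ × ℝ) : ℝ :=
  deriv (fun v => f (p.1, v)) p.2

/-- The explicit 2-soliton of the hyperbolic sine-Gordon equation obtained from the
Bianchi Permutability Theorem:
`ω₃ = 2·arctan(((σ₂+σ₁)/(σ₂−σ₁))·(e^{s₂} − e^{s₁})/(1 + e^{s₁+s₂}))`, where
`sⱼ(u,v) = ((σⱼ−σⱼ⁻¹)/2)·u + ((σⱼ+σⱼ⁻¹)/2)·v + cⱼ`, is smooth and satisfies the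
hyperbolic sine-Gordon equation `∂²ω₃/∂v² − ∂²ω₃/∂u² = cos ω₃ · sin ω₃`. -/
theorem twoSoliton_hyperbolic_sineGordon
    (σ₁ σ₂ : ℝ) (hσ₁ : σ₁ ≠ 0) (hσ₂ : σ₂ ≠ 0) (hσ : σ₁ ≠ σ₂)
    (c₁ c₂ : ℝ) (s₁ s₂ : ℝ × ℝ → ℝ)
    (hs₁ : s₁ = fun p : ℝ × ℝ => (σ₁ - σ₁⁻¹) / 2 * p.1 + (σ₁ + σ₁⁻¹) / 2 * p.2 + c₁)
    (hs₂ : s₂ = fun p : ℝ × ℝ => (σ₂ - σ₂⁻¹) / 2 * p.1 + (σ₂ + σ₂⁻¹) / 2 * p.2 + c₂)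
    (ω₃ : ℝ × ℝ → ℝ)
    (hω₃ : ω₃ = fun p : ℝ × ℝ =>
      2 * Real.arctan ((σ₂ + σ₁) / (σ₂ - σ₁) *
        ((Real.exp (s₂ p) - Real.exp (s₁ p)) / (1 + Real.exp (s₁ p + s₂ p))))) :
    ContDiff ℝ (⊤ : ℕ∞) ω₃ ∧
      ∀ p : ℝ × ℝ,
        pdv (pdv ω₃) p - pdu (pdu ω₃) p = Real.cos (ω₃ p) * Real.sin (ω₃ p) := by
  subst hs₁ hs₂ hω₃
  have hd : σ₂ - σ₁ ≠ 0 := sub_ne_zero.mpr (Ne.symm hσ)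
  set A := (σ₂ + σ₁) / (σ₂ - σ₁) with hA
  set a₁ := (σ₁ - σ₁⁻¹) / 2 with ha₁
  set b₁ := (σ₁ + σ₁⁻¹) / 2 with hb₁
  set a₂ := (σ₂ - σ₂⁻¹) / 2 with ha₂
  set b₂ := (σ₂ + σ₂⁻¹) / 2 with hb₂
  constructor
  · -- smoothness
    have hden : ∀ p : ℝ × ℝ, (1 : ℝ) + Real.exp ((a₁*p.1 + b₁*p.2 + c₁) + (a₂*p.1 + b₂*p.2 + c₂)) ≠ 0 := by
      intro p; positivity
    have hs1 : ContDiff ℝ (⊤ : ℕ∞) (fun p : ℝ × ℝ => a₁ * p.1 + b₁ * p.2 + c₁) := by fun_prop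
    have hs2 : ContDiff ℝ (⊤ : ℕ∞) (fun p : ℝ × ℝ => a₂ * p.1 + b₂ * p.2 + c₂) := by fun_prop
    have hinner : ContDiff ℝ (⊤ : ℕ∞) (fun p : ℝ × ℝ => A *
        ((Real.exp (a₂*p.1 + b₂*p.2 + c₂) - Real.exp (a₁*p.1 + b₁*p.2 + c₁)) /
          (1 + Real.exp ((a₁*p.1 + b₁*p.2 + c₁) + (a₂*p.1 + b₂*p.2 + c₂))))) :=
      contDiff_const.mul (((Real.contDiff_exp.comp hs2).sub (Real.contDiff_exp.comp hs1)).div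
        (contDiff_const.add (Real.contDiff_exp.comp (hs1.add hs2))) hden)
    exact contDiff_const.mul (Real.contDiff_arctan.comp hinner)
  · intro p
    -- first partial derivatives
    have h1u : ∀ q : ℝ × ℝ, pdu (fun p : ℝ × ℝ =>
        2 * Real.arctan (A * ((Real.exp (a₂*p.1 + b₂*p.2 + c₂) - Real.exp (a₁*p.1 + b₁*p.2 + c₁)) /
          (1 + Real.exp ((a₁*p.1 + b₁*p.2 + c₁) + (a₂*p.1 + b₂*p.2 + c₂)))))) q
        = W1 A a₁ a₂ (Real.exp (a₁*q.1 + (b₁*q.2 + c₁))) (Real.exp (a₂*q.1 + (b₂*q.2 + c₂))) := by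
      intro q
      have hfe : (fun u => 2 * Real.arctan (A * ((Real.exp (a₂*u + b₂*q.2 + c₂) - Real.exp (a₁*u + b₁*q.2 + c₁)) /
          (1 + Real.exp ((a₁*u + b₁*q.2 + c₁) + (a₂*u + b₂*q.2 + c₂))))))
          = (fun u => 2 * Real.arctan (A * ((Real.exp (a₂*u + (b₂*q.2 + c₂)) - Real.exp (a₁*u + (b₁*q.2 + c₁))) /
          (1 + Real.exp ((a₁*u + (b₁*q.2 + c₁)) + (a₂*u + (b₂*q.2 + c₂))))))) := by
        simp only [add_assoc]
      rw [pdu]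
      simp only []
      rw [hfe]
      exact (firstDeriv A a₁ (b₁*q.2 + c₁) a₂ (b₂*q.2 + c₂) q.1).deriv
    have h1v : ∀ q : ℝ × ℝ, pdv (fun p : ℝ × ℝ =>
        2 * Real.arctan (A * ((Real.exp (a₂*p.1 + b₂*p.2 + c₂) - Real.exp (a₁*p.1 + b₁*p.2 + c₁)) /
          (1 + Real.exp ((a₁*p.1 + b₁*p.2 + c₁) + (a₂*p.1 + b₂*p.2 + c₂)))))) q
        = W1 A b₁ b₂ (Real.exp (b₁*q.2 + (a₁*q.1 + c₁))) (Real.exp (b₂*q.2 + (a₂*q.1 + c₂))) := by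
      intro q
      have e1 : ∀ v : ℝ, a₁*q.1 + b₁*v + c₁ = b₁*v + (a₁*q.1 + c₁) := fun v => by ring
      have e2 : ∀ v : ℝ, a₂*q.1 + b₂*v + c₂ = b₂*v + (a₂*q.1 + c₂) := fun v => by ring
      have hfe : (fun v => 2 * Real.arctan (A * ((Real.exp (a₂*q.1 + b₂*v + c₂) - Real.exp (a₁*q.1 + b₁*v + c₁)) /
          (1 + Real.exp ((a₁*q.1 + b₁*v + c₁) + (a₂*q.1 + b₂*v + c₂))))))
          = (fun v => 2 * Real.arctan (A * ((Real.exp (b₂*v + (a₂*q.1 + c₂)) - Real.exp (b₁*v + (a₁*q.1 + c₁))) /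
          (1 + Real.exp ((b₁*v + (a₁*q.1 + c₁)) + (b₂*v + (a₂*q.1 + c₂))))))) := by
        simp only [e1, e2]
      rw [pdv]
      simp only []
      rw [hfe]
      exact (firstDeriv A b₁ (a₁*q.1 + c₁) b₂ (a₂*q.1 + c₂) q.2).deriv
    -- second partial derivatives
    have h2u : pdu (pdu (fun p : ℝ × ℝ =>
        2 * Real.arctan (A * ((Real.exp (a₂*p.1 + b₂*p.2 + c₂) - Real.exp (a₁*p.1 + b₁*p.2 + c₁)) /
          (1 + Real.exp ((a₁*p.1 + b₁*p.2 + c₁) + (a₂*p.1 + b₂*p.2 + c₂))))))) p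
        = W2 A a₁ a₂ (Real.exp (a₁*p.1 + (b₁*p.2 + c₁))) (Real.exp (a₂*p.1 + (b₂*p.2 + c₂))) := by
      rw [pdu]
      have hfe : (fun u => pdu (fun p : ℝ × ℝ =>
          2 * Real.arctan (A * ((Real.exp (a₂*p.1 + b₂*p.2 + c₂) - Real.exp (a₁*p.1 + b₁*p.2 + c₁)) /
          (1 + Real.exp ((a₁*p.1 + b₁*p.2 + c₁) + (a₂*p.1 + b₂*p.2 + c₂)))))) (u, p.2))
          = fun u => W1 A a₁ a₂ (Real.exp (a₁*u + (b₁*p.2 + c₁))) (Real.exp (a₂*u + (b₂*p.2 + c₂))) := by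
        funext u; exact h1u (u, p.2)
      rw [hfe]
      exact (secondDeriv A a₁ (b₁*p.2 + c₁) a₂ (b₂*p.2 + c₂) p.1).deriv
    have h2v : pdv (pdv (fun p : ℝ × ℝ =>
        2 * Real.arctan (A * ((Real.exp (a₂*p.1 + b₂*p.2 + c₂) - Real.exp (a₁*p.1 + b₁*p.2 + c₁)) /
          (1 + Real.exp ((a₁*p.1 + b₁*p.2 + c₁) + (a₂*p.1 + b₂*p.2 + c₂))))))) p
        = W2 A b₁ b₂ (Real.exp (b₁*p.2 + (a₁*p.1 + c₁))) (Real.exp (b₂*p.2 + (a₂*p.1 + c₂))) := by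
      rw [pdv]
      have hfe : (fun v => pdv (fun p : ℝ × ℝ =>
          2 * Real.arctan (A * ((Real.exp (a₂*p.1 + b₂*p.2 + c₂) - Real.exp (a₁*p.1 + b₁*p.2 + c₁)) /
          (1 + Real.exp ((a₁*p.1 + b₁*p.2 + c₁) + (a₂*p.1 + b₂*p.2 + c₂)))))) (p.1, v))
          = fun v => W1 A b₁ b₂ (Real.exp (b₁*v + (a₁*p.1 + c₁))) (Real.exp (b₂*v + (a₂*p.1 + c₂))) := by
        funext v; exact h1v (p.1, v)
      rw [hfe]
      exact (secondDeriv A b₁ (a₁*p.1 + c₁) b₂ (a₂*p.1 + c₂) p.2).deriv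
    rw [h2u, h2v]
    -- align the exponentials
    have eX : Real.exp (b₁*p.2 + (a₁*p.1 + c₁)) = Real.exp (a₁*p.1 + (b₁*p.2 + c₁)) :=
      congrArg Real.exp (by ring)
    have eY : Real.exp (b₂*p.2 + (a₂*p.1 + c₂)) = Real.exp (a₂*p.1 + (b₂*p.2 + c₂)) :=
      congrArg Real.exp (by ring)
    rw [eX, eY]
    set X := Real.exp (a₁*p.1 + (b₁*p.2 + c₁)) with hX
    set Y := Real.exp (a₂*p.1 + (b₂*p.2 + c₂)) with hY
    have hX0 : 0 < X := Real.exp_pos _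
    have hY0 : 0 < Y := Real.exp_pos _
    have hbody : (fun p : ℝ × ℝ =>
        2 * Real.arctan (A * ((Real.exp (a₂*p.1 + b₂*p.2 + c₂) - Real.exp (a₁*p.1 + b₁*p.2 + c₁)) /
          (1 + Real.exp ((a₁*p.1 + b₁*p.2 + c₁) + (a₂*p.1 + b₂*p.2 + c₂)))))) p
        = 2 * Real.arctan (A * ((Y - X) / (1 + X*Y))) := by
      have e4 : Real.exp (a₁*p.1 + b₁*p.2 + c₁) = X := congrArg Real.exp (by ring)
      have e5 : Real.exp (a₂*p.1 + b₂*p.2 + c₂) = Y := congrArg Real.exp (by ring)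
      have e6 : Real.exp (a₁*p.1 + b₁*p.2 + c₁ + (a₂*p.1 + b₂*p.2 + c₂)) = X*Y := by
        rw [Real.exp_add, e4, e5]
      simp only []
      rw [e4, e5, e6]
    rw [hbody]
    exact key A a₁ b₁ a₂ b₂ X Y hX0 hY0
      (poly_key σ₁ σ₂ X Y A a₁ b₁ a₂ b₂ hσ₁ hσ₂ hd hA ha₁ hb₁ ha₂ hb₂)
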